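/- Let G be a finite graph, A, B ⊆ V(G), and k an integer with k ≥ flow_G(A,B). Then the number of important (A,B)-separators of size at most k is at most k^{k − flow_G(A,B)}. -/

import Mathlib

open SimpleGraph

variable {V ι : Type*}

/-- The torso of `G` on a vertex set `X`: vertices `u ≠ v` of `X` are adjacent iff there is a
`u`–`v` walk in `G` all of whose internal vertices lie outside `X`. -/
def torsoGraph (G : SimpleGraph V) (X : Set V) : SimpleGraph V where
  Adj u v := u ≠ v ∧ u ∈ X ∧ v ∈ X ∧
    ∃ p : G.Walk u v, ∀ w ∈ p.support, w = u ∨ w = v ∨ w ∉ X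
  symm := by
    constructor
    rintro u v ⟨hne, hu, hv, p, hp⟩
    refine ⟨hne.symm, hv, hu, p.reverse, ?_⟩
    intro w hw
    rw [SimpleGraph.Walk.support_reverse, List.mem_reverse] at hw
    rcases hp w hw with h | h | h
    · exact Or.inr (Or.inl h)
    · exact Or.inl h
    · exact Or.inr (Or.inr h)
  loopless := ⟨fun _ h => h.1 rfl⟩

/-- `(T, bag)` is a tree decomposition of `G`. -/
structure IsTreeDecomp (G : SimpleGraph V) (T : SimpleGraph ι) (bag : ι → Set V) : Prop where
  tree : T.IsTree
  mem_bag : ∀ v : V, ∃ t, v ∈ bag t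
  edge_bag : ∀ ⦃u v : V⦄, G.Adj u v → ∃ t, u ∈ bag t ∧ v ∈ bag t
  conn : ∀ v : V, (T.induce {t | v ∈ bag t}).Connected

/-- `(X, (T, bag))` is a torso tree decomposition in `G`, i.e. `(T, bag)` is a tree
decomposition of `torsoGraph G X`. -/
structure IsTorsoTreeDecomp (G : SimpleGraph V) (X : Set V)
    (T : SimpleGraph ι) (bag : ι → Set V) : Prop where
  tree : T.IsTree
  bag_subset : ∀ t, bag t ⊆ X
  mem_bag : ∀ v ∈ X, ∃ t, v ∈ bag t
  edge_bag : ∀ ⦃u v : V⦄, (torsoGraph G X).Adj u v → ∃ t, u ∈ bag t ∧ v ∈ bag t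
  conn : ∀ v ∈ X, (T.induce {t | v ∈ bag t}).Connected

/-- `G` has treewidth at most `k`. -/
def HasTreewidthAtMost (G : SimpleGraph V) (k : ℕ) : Prop :=
  ∃ (n : ℕ) (T : SimpleGraph (Fin n)) (bag : Fin n → Set V),
    IsTreeDecomp G T bag ∧ ∀ t, (bag t).ncard ≤ k + 1

/-- `S` is an `(X, Y)`-separator in `G`: every walk from `X` to `Y` meets `S`. -/
def IsSep (G : SimpleGraph V) (X Y S : Set V) : Prop :=
  ∀ ⦃x y : V⦄, x ∈ X → y ∈ Y → ∀ p : G.Walk x y, ∃ s ∈ S, s ∈ p.support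

/-- The maximum number of vertex-disjoint `X`–`Y` paths; by Menger's theorem this equals the
minimum size of an `(X, Y)`-separator, which is how we define it. -/
noncomputable def flowG (G : SimpleGraph V) (X Y : Set V) : ℕ :=
  sInf (Set.ncard '' {S : Set V | IsSep G X Y S})

/-- `X` is linked into `Y`. -/
def LinkedInto (G : SimpleGraph V) (X Y : Set V) : Prop :=
  flowG G X Y = X.ncard

/-- `X` is strictly linked into `Y`. -/
def StrictlyLinkedInto (G : SimpleGraph V) (X Y : Set V) : Prop :=
  LinkedInto G X Y ∧
    ∀ S : Set V, IsSep G X Y S → S.ncard = X.ncard → S = X ∨ S = Y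

/-- `R_G(X, S)`: the set of vertices of `G \ S` reachable from `X \ S`. -/
def reachG (G : SimpleGraph V) (X S : Set V) : Set V :=
  {v | ∃ x ∈ X, x ∉ S ∧ ∃ p : G.Walk x v, ∀ w ∈ p.support, w ∉ S}

/-- `S` is a minimal `(X, Y)`-separator. -/
def IsMinimalSep (G : SimpleGraph V) (X Y S : Set V) : Prop :=
  IsSep G X Y S ∧ ∀ S' : Set V, S' ⊂ S → ¬ IsSep G X Y S'

/-- `S` is an important `(A, B)`-separator. -/
def IsImportantSep (G : SimpleGraph V) (A B S : Set V) : Prop :=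
  IsMinimalSep G A B S ∧
    ¬ ∃ S' : Set V, IsSep G A B S' ∧ S'.ncard ≤ S.ncard ∧ reachG G A S ⊂ reachG G A S'

/-- The important `(A, B)`-separator `S'` dominates the `(A, B)`-separator `S`. -/
def DominatesSep (G : SimpleGraph V) (A B S S' : Set V) : Prop :=
  IsImportantSep G A B S' ∧ S'.ncard ≤ S.ncard ∧ reachG G A S ⊆ reachG G A S'

/-- `(A, S, B)` is a separation of `G`. -/
structure IsSeparation (G : SimpleGraph V) (A S B : Set V) : Prop where
  disjoint_AS : Disjoint A S
  disjoint_AB : Disjoint A B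
  disjoint_SB : Disjoint S B
  union_eq : A ∪ S ∪ B = Set.univ
  no_adj : ∀ ⦃a b : V⦄, a ∈ A → b ∈ B → ¬ G.Adj a b

open Classical in
/-- The flow potential `flp_G(X, Y)`. -/
noncomputable def flpG (G : SimpleGraph V) (X Y : Set V) : ℕ :=
  if X = Set.univ then X.ncard
  else sInf {n : ℕ | ∃ A S B : Set V, IsSeparation G A S B ∧
    X ⊆ A ∪ S ∧ Y ⊆ B ∪ S ∧ B.Nonempty ∧ S.ncard = n}

/-- The graph consisting of a clique on `S` (and no other edges). -/
def cliqueOn (S : Set V) : SimpleGraph V where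
  Adj u v := u ≠ v ∧ u ∈ S ∧ v ∈ S
  symm := ⟨fun _ _ ⟨h, hu, hv⟩ => ⟨h.symm, hv, hu⟩⟩
  loopless := ⟨fun _ h => h.1 rfl⟩

/-- `G ⊗ S`: the graph obtained from `G` by making `S` a clique. -/
def addCliqueG (G : SimpleGraph V) (S : Set V) : SimpleGraph V := G ⊔ cliqueOn S

/-- `(G, Ws, k)` is an instance of Partitioned Subset Treewidth: `Ws` is a finite nonempty
family of terminal cliques, `k ≥ 1`, each terminal clique being a clique of `G` of size at
most `k + 1`. -/
def IsPSTWInstance (G : SimpleGraph V) (Ws : Set (Set V)) (k : ℕ) : Prop :=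
  Ws.Finite ∧ Ws.Nonempty ∧ 1 ≤ k ∧ ∀ W ∈ Ws, G.IsClique W ∧ W.ncard ≤ k + 1

/-- `(X, (T, bag))` is a solution of the instance `(G, Ws, k)`. -/
def IsSolutionTD (G : SimpleGraph V) (Ws : Set (Set V)) (k : ℕ)
    (X : Set V) (T : SimpleGraph ι) (bag : ι → Set V) : Prop :=
  IsTorsoTreeDecomp G X T bag ∧ ⋃₀ Ws ⊆ X ∧ ∀ t, (bag t).ncard ≤ k + 1

/-- The instance `(G, Ws, k)` is a yes-instance. -/
def IsYesInstance (G : SimpleGraph V) (Ws : Set (Set V)) (k : ℕ) : Prop :=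
  ∃ (κ : Type) (T : SimpleGraph κ) (bag : κ → Set V) (X : Set V),
    IsSolutionTD G Ws k X T bag

/-- `W̄_I(W)`: the union of the terminal cliques other than `W`. -/
def otherUnion (Ws : Set (Set V)) (W : Set V) : Set V := ⋃₀ (Ws \ {W})

/-- `flp_I(W) = flp_G(W, W̄_I(W))`. -/
noncomputable def flpInst (G : SimpleGraph V) (Ws : Set (Set V)) (W : Set V) : ℕ :=
  flpG G W (otherUnion Ws W)

/-- `(A, S, B)` is a safe separation of the instance `(G, Ws, k)`. -/
def IsSafeSeparation (G : SimpleGraph V) (Ws : Set (Set V)) (A S B : Set V) : Prop :=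
  IsSeparation G A S B ∧ A.Nonempty ∧ B.Nonempty ∧
    ∃ Wa ∈ Ws, ∃ Wb ∈ Ws,
      LinkedInto G S ((A ∪ S) ∩ Wa) ∧ LinkedInto G S ((B ∪ S) ∩ Wb)

/-- `Ws ◁ (A, S)`: remove the terminal cliques not meeting `A`, then insert `S` if no superset
of `S` is present. -/
def restrictCliques (Ws : Set (Set V)) (A S : Set V) : Set (Set V) :=
  {W ∈ Ws | (W ∩ A).Nonempty} ∪
    {W | W = S ∧ ¬ ∃ W' ∈ Ws, (W' ∩ A).Nonempty ∧ S ⊆ W'}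

/-- `G ◁ (A, S) = G[A ∪ S] ⊗ S`, as a graph on the vertex set `A ∪ S`. -/
def restrictGraph (G : SimpleGraph V) (A S : Set V) : SimpleGraph ↥(A ∪ S) :=
  addCliqueG (G.induce (A ∪ S)) (Subtype.val ⁻¹' S)

/-- The terminal cliques of `I ◁ (A, S)`, viewed as subsets of the vertex set `A ∪ S`. -/
def restrictSets (Ws : Set (Set V)) (A S : Set V) : Set (Set ↥(A ∪ S)) :=
  (fun W => Subtype.val ⁻¹' W) '' restrictCliques Ws A S

/-- The terminal cliques of `I × (Wi, Wj)`. -/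
def mergeCliques (Ws : Set (Set V)) (Wi Wj : Set V) : Set (Set V) :=
  insert (Wi ∪ Wj) (Ws \ {Wi, Wj})

/-- The terminal cliques of `I + (W, ·)`, replacing `W` by `W'`. -/
def replaceClique (Ws : Set (Set V)) (W W' : Set V) : Set (Set V) :=
  insert W' (Ws \ {W})

/-- The instance `(G, Ws, k)` is maximally merged. -/
def MaximallyMerged (G : SimpleGraph V) (Ws : Set (Set V)) (k : ℕ) : Prop :=
  ∀ Wi ∈ Ws, ∀ Wj ∈ Ws, Wi ≠ Wj → (Wi ∪ Wj).ncard ≤ k + 1 →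
    ¬ IsYesInstance (addCliqueG G (Wi ∪ Wj)) (mergeCliques Ws Wi Wj) k

/-- `Wi` is a potential forget-clique of the instance `(G, Ws, k)`. -/
def IsPotentialForgetClique (G : SimpleGraph V) (Ws : Set (Set V)) (k : ℕ)
    (Wi : Set V) : Prop :=
  ∃ (κ : Type) (T : SimpleGraph κ) (bag : κ → Set V) (X : Set V),
    IsSolutionTD G Ws k X T bag ∧
    ∃ l p : κ, T.Adj l p ∧ (∀ q, T.Adj l q → q = p) ∧
      Wi ⊆ bag l ∧ ∃ w ∈ Wi \ otherUnion Ws Wi, bag p = bag l \ {w}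

/-- The disjoint union of two trees together with one extra edge between `a` and `b`. -/
def glueTrees {ι₁ ι₂ : Type*} (T₁ : SimpleGraph ι₁) (T₂ : SimpleGraph ι₂)
    (a : ι₁) (b : ι₂) : SimpleGraph (ι₁ ⊕ ι₂) where
  Adj x y :=
    (∃ u v, T₁.Adj u v ∧ x = Sum.inl u ∧ y = Sum.inl v) ∨
    (∃ u v, T₂.Adj u v ∧ x = Sum.inr u ∧ y = Sum.inr v) ∨
    (x = Sum.inl a ∧ y = Sum.inr b) ∨
    (x = Sum.inr b ∧ y = Sum.inl a)
  symm := by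
    constructor
    rintro x y (⟨u, v, h, rfl, rfl⟩ | ⟨u, v, h, rfl, rfl⟩ | ⟨rfl, rfl⟩ | ⟨rfl, rfl⟩)
    · exact Or.inl ⟨v, u, h.symm, rfl, rfl⟩
    · exact Or.inr (Or.inl ⟨v, u, h.symm, rfl, rfl⟩)
    · exact Or.inr (Or.inr (Or.inr ⟨rfl, rfl⟩))
    · exact Or.inr (Or.inr (Or.inl ⟨rfl, rfl⟩))
  loopless := by
    constructor
    rintro x (⟨u, v, h, rfl, he⟩ | ⟨u, v, h, rfl, he⟩ | ⟨rfl, he⟩ | ⟨rfl, he⟩)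
    · exact h.ne (Sum.inl.inj he)
    · exact h.ne (Sum.inr.inj he)
    · exact Sum.inl_ne_inr he
    · exact Sum.inr_ne_inl he

/-- The sum of the weights `d` over the set `S`. -/
noncomputable def setSum [Finite V] (d : V → ℕ) (S : Set V) : ℕ :=
  ∑ v ∈ S.toFinite.toFinset, d v

/-!
Grow an auxiliary set `X` that the counted separators must reach beyond, starting from `X = ∅`.
By submodularity of separator sizes there is a furthest minimum `(A ∪ X, B)`-separator `S'`
avoiding `X`, and every important separator `S` whose reach contains `X` reaches at least as far
as `S'`. Hence either `S = S'`, the only possibility once the flow has reached `k`, or some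
`v ∈ S'` lies in the reach of `S`; then adding `v` and the reach of `S'` to `X` raises the flow by
at least one. Counting `S'` itself and the `flow < k` branches, induction on `k - flow` gives
`1 + flow · k ^ (k - flow - 1) ≤ k ^ (k - flow)`.
-/

lemma Set.ncard_add_ncard_le_of_subset_union {α : Type*} [Finite α] {s t u v : Set α}
    (hu : u ⊆ s ∪ t) (hv : v ⊆ s ∪ t) (huv : u ∩ v ⊆ s ∩ t) :
    u.ncard + v.ncard ≤ s.ncard + t.ncard := by
  rw [← Set.ncard_union_add_ncard_inter u v, ← Set.ncard_union_add_ncard_inter s t]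
  exact add_le_add (Set.ncard_le_ncard (Set.union_subset hu hv)) (Set.ncard_le_ncard huv)

lemma Set.ncard_biUnion_le_ncard_mul {ι α : Type*} {t : Set ι} (ht : t.Finite)
    {s : ι → Set α} {n : ℕ} (h : ∀ i ∈ t, (s i).ncard ≤ n) :
    (⋃ i ∈ t, s i).ncard ≤ t.ncard * n :=
  calc (⋃ i ∈ t, s i).ncard = (⋃ i ∈ ht.toFinset, s i).ncard := by simp
    _ ≤ ∑ i ∈ ht.toFinset, (s i).ncard := Finset.set_ncard_biUnion_le _ _
    _ ≤ ht.toFinset.card • n := Finset.sum_le_card_nsmul _ _ _ (by simpa using h)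
    _ = t.ncard * n := by rw [smul_eq_mul, Set.ncard_eq_toFinset_card t ht]

section Reach

variable {G : SimpleGraph V} {A A' S T : Set V}

lemma notMem_of_mem_reachG {v : V} (hv : v ∈ reachG G A S) : v ∉ S := by
  obtain ⟨_, _, _, p, hp⟩ := hv
  exact hp v p.end_mem_support

lemma mem_reachG_of_mem_or_adj {w : V} (hw : w ∉ S)
    (h : w ∈ A ∨ ∃ u ∈ reachG G A S, G.Adj u w) : w ∈ reachG G A S := by
  rcases h with hwA | ⟨u, ⟨x, hx, hxS, p, hp⟩, huw⟩
  · exact ⟨w, hwA, hw, .nil, by simpa using hw⟩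
  · refine ⟨x, hx, hxS, p.concat huw, fun y hy => ?_⟩
    simp only [Walk.support_concat, List.mem_append, List.mem_singleton] at hy
    rcases hy with hy | rfl
    exacts [hp y hy, hw]

lemma subset_reachG {X : Set V} (hXA : X ⊆ A) (hXS : Disjoint X S) : X ⊆ reachG G A S :=
  fun _ hx => mem_reachG_of_mem_or_adj (hXS.notMem_of_mem_left hx) (Or.inl (hXA hx))

lemma reachG_subset_of_closed {R : Set V}
    (h : ∀ w ∉ S, (w ∈ A ∨ ∃ u ∈ R, G.Adj u w) → w ∈ R) : reachG G A S ⊆ R := by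
  rintro v ⟨x, hx, hxS, p, hp⟩
  have hxR : x ∈ R := h x hxS (Or.inl hx)
  clear hx hxS
  induction p with
  | nil => exact hxR
  | @cons x y _ hxy q ih =>
    rw [Walk.support_cons] at hp
    have hyR : y ∈ R :=
      h y (hp y (List.mem_cons_of_mem _ q.start_mem_support)) (Or.inr ⟨x, hxR, hxy⟩)
    exact ih (fun w hw => hp w (List.mem_cons_of_mem _ hw)) hyR

lemma reachG_subset_reachG_of_disjoint (h : Disjoint (reachG G A S) T) :
    reachG G A S ⊆ reachG G A T := by
  refine (reachG_subset_of_closed (R := reachG G A S ∩ reachG G A T) fun w hwS hw => ?_).trans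
    Set.inter_subset_right
  have hwR : w ∈ reachG G A S :=
    mem_reachG_of_mem_or_adj hwS (hw.imp_right fun ⟨u, hu, huw⟩ => ⟨u, hu.1, huw⟩)
  exact ⟨hwR, mem_reachG_of_mem_or_adj (h.notMem_of_mem_left hwR)
    (hw.imp_right fun ⟨u, hu, huw⟩ => ⟨u, hu.2, huw⟩)⟩

lemma reachG_mono_left (h : A ⊆ A') : reachG G A S ⊆ reachG G A' S := by
  rintro v ⟨x, hx, hxS, p, hp⟩
  exact ⟨x, h hx, hxS, p, hp⟩

lemma reachG_union_eq_of_subset {X : Set V} (hX : X ⊆ reachG G A S) :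
    reachG G (A ∪ X) S = reachG G A S := by
  refine (reachG_subset_of_closed fun w hwS hw => ?_).antisymm
    (reachG_mono_left Set.subset_union_left)
  rcases hw with (hwA | hwX) | hadj
  exacts [mem_reachG_of_mem_or_adj hwS (Or.inl hwA), hX hwX,
    mem_reachG_of_mem_or_adj hwS (Or.inr hadj)]

end Reach

section Separator

variable {G : SimpleGraph V} {A A' B S T : Set V}

lemma isSep_iff_disjoint_reachG : IsSep G A B S ↔ Disjoint (reachG G A S) B := by
  refine ⟨fun hS => Set.disjoint_left.mpr ?_, fun h x y hx hy p => ?_⟩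
  · rintro v ⟨x, hx, -, p, hp⟩ hv
    obtain ⟨s, hs, hsp⟩ := hS hx hv p
    exact hp s hsp hs
  · by_contra! hp
    have hxS : x ∉ S := fun hxS => hp x hxS p.start_mem_support
    exact h.notMem_of_mem_left ⟨x, hx, hxS, p, fun w hw hwS => hp w hwS hw⟩ hy

lemma IsSep.mono_left (hS : IsSep G A B S) (h : A' ⊆ A) : IsSep G A' B S :=
  fun _ _ hx hy p => hS (h hx) hy p

lemma IsMinimalSep.mem_or_adj (hS : IsMinimalSep G A B S) {s : V} (hs : s ∈ S) :
    s ∈ A ∨ ∃ u ∈ reachG G A S, G.Adj u s := by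
  by_contra! h
  refine hS.2 (S \ {s}) (Set.sdiff_singleton_ssubset.mpr hs) ?_
  rw [isSep_iff_disjoint_reachG]
  refine (isSep_iff_disjoint_reachG.mp hS.1).mono_left
    (reachG_subset_of_closed fun w hw hwA => ?_)
  by_cases hws : w = s
  · subst hws
    rcases hwA with hwA | ⟨u, hu, huw⟩
    exacts [absurd hwA h.1, absurd huw (h.2 u hu)]
  · exact mem_reachG_of_mem_or_adj (fun hwS => hw ⟨hwS, hws⟩) hwA

lemma IsMinimalSep.subset_union_reachG (hS : IsMinimalSep G A B S)
    (h : reachG G A S ⊆ reachG G A T) : S ⊆ T ∪ reachG G A T := by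
  intro s hs
  by_contra! hsT
  rw [Set.mem_union, not_or] at hsT
  exact hsT.2 (mem_reachG_of_mem_or_adj hsT.1
    ((hS.mem_or_adj hs).imp_right fun ⟨u, hu, hus⟩ => ⟨u, h hu, hus⟩))

lemma IsMinimalSep.eq_of_reachG_eq (hS : IsMinimalSep G A B S) (hT : IsMinimalSep G A B T)
    (h : reachG G A S = reachG G A T) : S = T := by
  have hST : S ⊆ T := fun s hs =>
    (hS.subset_union_reachG h.le hs).resolve_right fun hsR => notMem_of_mem_reachG (h ▸ hsR) hs
  by_contra hne
  exact hT.2 S (hST.ssubset_of_ne hne) hS.1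

lemma IsImportantSep.reachG_eq_of_subset (hS : IsImportantSep G A B S) (hT : IsSep G A B T)
    (hcard : T.ncard ≤ S.ncard) (h : reachG G A S ⊆ reachG G A T) :
    reachG G A T = reachG G A S := by
  by_contra hne
  exact hS.2 ⟨T, hT, hcard, h.ssubset_of_ne (Ne.symm hne)⟩

end Separator

section Submodularity

variable {G : SimpleGraph V} {A B S T : Set V}

def unionSep (G : SimpleGraph V) (A S T : Set V) : Set V :=
  (S ∪ T) \ (reachG G A S ∪ reachG G A T)

def interSep (G : SimpleGraph V) (A S T : Set V) : Set V :=
  S ∩ (T ∪ reachG G A T) ∪ T ∩ reachG G A S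

lemma reachG_unionSep :
    reachG G A (unionSep G A S T) = reachG G A S ∪ reachG G A T := by
  refine (reachG_subset_of_closed fun w hw hwA => ?_).antisymm
    (Set.union_subset (reachG_subset_reachG_of_disjoint ?_) (reachG_subset_reachG_of_disjoint ?_))
  · by_cases hwST : w ∈ S ∪ T
    · by_contra hwR
      exact hw ⟨hwST, hwR⟩
    rw [Set.mem_union, not_or] at hwST
    rcases hwA with hwA | ⟨u, hu | hu, huw⟩
    · exact Or.inl (mem_reachG_of_mem_or_adj hwST.1 (Or.inl hwA))
    · exact Or.inl (mem_reachG_of_mem_or_adj hwST.1 (Or.inr ⟨u, hu, huw⟩))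
    · exact Or.inr (mem_reachG_of_mem_or_adj hwST.2 (Or.inr ⟨u, hu, huw⟩))
  · exact Set.disjoint_left.mpr fun w hw hwU => hwU.2 (Or.inl hw)
  · exact Set.disjoint_left.mpr fun w hw hwU => hwU.2 (Or.inr hw)

lemma reachG_interSep_subset :
    reachG G A (interSep G A S T) ⊆ reachG G A S ∩ reachG G A T := by
  refine reachG_subset_of_closed fun w hw hwA => ?_
  have hwA_S : w ∈ A ∨ ∃ u ∈ reachG G A S, G.Adj u w :=
    hwA.imp_right fun ⟨u, hu, huw⟩ => ⟨u, hu.1, huw⟩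
  have hwA_T : w ∈ A ∨ ∃ u ∈ reachG G A T, G.Adj u w :=
    hwA.imp_right fun ⟨u, hu, huw⟩ => ⟨u, hu.2, huw⟩
  have hwS : w ∉ S := by
    intro hwS
    refine hw (Or.inl ⟨hwS, ?_⟩)
    by_cases hwT : w ∈ T
    · exact Or.inl hwT
    · exact Or.inr (mem_reachG_of_mem_or_adj hwT hwA_T)
  have hwRS : w ∈ reachG G A S := mem_reachG_of_mem_or_adj hwS hwA_S
  exact ⟨hwRS, mem_reachG_of_mem_or_adj (fun hwT => hw (Or.inr ⟨hwT, hwRS⟩)) hwA_T⟩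

lemma isSep_unionSep (hS : IsSep G A B S) (hT : IsSep G A B T) :
    IsSep G A B (unionSep G A S T) := by
  rw [isSep_iff_disjoint_reachG, reachG_unionSep]
  exact (isSep_iff_disjoint_reachG.mp hS).union_left (isSep_iff_disjoint_reachG.mp hT)

lemma isSep_interSep (hS : IsSep G A B S) : IsSep G A B (interSep G A S T) := by
  rw [isSep_iff_disjoint_reachG]
  exact (isSep_iff_disjoint_reachG.mp hS).mono_left
    (reachG_interSep_subset.trans Set.inter_subset_left)

lemma unionSep_subset : unionSep G A S T ⊆ S ∪ T := Set.sdiff_subset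

lemma interSep_subset : interSep G A S T ⊆ S ∪ T :=
  Set.union_subset (Set.inter_subset_left.trans Set.subset_union_left)
    (Set.inter_subset_left.trans Set.subset_union_right)

lemma ncard_unionSep_add_ncard_interSep_le [Finite V] :
    (unionSep G A S T).ncard + (interSep G A S T).ncard ≤ S.ncard + T.ncard := by
  refine Set.ncard_add_ncard_le_of_subset_union unionSep_subset interSep_subset ?_
  rintro w ⟨⟨hwST, hwR⟩, ⟨hwS, hwT | hwT⟩ | ⟨-, hwRS⟩⟩
  · exact ⟨hwS, hwT⟩
  · exact absurd (Or.inr hwT) hwR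
  · exact absurd (Or.inl hwRS) hwR

end Submodularity

section MinSepAvoiding

variable {G : SimpleGraph V} {A B F S T : Set V}

/-- The minimum size of an `(A, B)`-separator disjoint from `F`, or `0` if there is none. -/
noncomputable def flowAvoiding (G : SimpleGraph V) (A B F : Set V) : ℕ :=
  sInf (Set.ncard '' {S | IsSep G A B S ∧ Disjoint S F})

lemma flowAvoiding_le (hS : IsSep G A B S) (hSF : Disjoint S F) :
    flowAvoiding G A B F ≤ S.ncard :=
  Nat.sInf_le ⟨S, ⟨hS, hSF⟩, rfl⟩

lemma flowAvoiding_empty : flowAvoiding G A B ∅ = flowG G A B := by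
  simp [flowAvoiding, flowG]

structure IsMinSepAvoiding (G : SimpleGraph V) (A B F S : Set V) : Prop where
  isSep : IsSep G A B S
  disjoint : Disjoint S F
  ncard_eq : S.ncard = flowAvoiding G A B F

lemma exists_isMinSepAvoiding (hS : IsSep G A B S) (hSF : Disjoint S F) :
    ∃ T, IsMinSepAvoiding G A B F T := by
  obtain ⟨T, ⟨hT, hTF⟩, hcard⟩ := Nat.sInf_mem (⟨S.ncard, S, ⟨hS, hSF⟩, rfl⟩ :
    (Set.ncard '' {S | IsSep G A B S ∧ Disjoint S F}).Nonempty)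
  exact ⟨T, hT, hTF, hcard⟩

variable [Finite V]

lemma IsMinSepAvoiding.isMinimalSep (hS : IsMinSepAvoiding G A B F S) :
    IsMinimalSep G A B S :=
  ⟨hS.isSep, fun T hTS hT => (flowAvoiding_le hT (hS.disjoint.mono_left hTS.subset)).not_gt
    (hS.ncard_eq ▸ Set.ncard_lt_ncard hTS)⟩

lemma IsMinSepAvoiding.ncard_unionSep_le (hS : IsMinSepAvoiding G A B F S)
    (hTF : Disjoint T F) : (unionSep G A S T).ncard ≤ T.ncard := by
  have hsum := ncard_unionSep_add_ncard_interSep_le (G := G) (A := A) (S := S) (T := T)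
  have hinter := flowAvoiding_le (isSep_interSep (T := T) hS.isSep)
    ((hS.disjoint.union_left hTF).mono_left interSep_subset)
  rw [← hS.ncard_eq] at hinter
  omega

lemma IsMinSepAvoiding.unionSep (hS : IsMinSepAvoiding G A B F S)
    (hT : IsMinSepAvoiding G A B F T) : IsMinSepAvoiding G A B F (_root_.unionSep G A S T) := by
  have hUF : Disjoint (_root_.unionSep G A S T) F :=
    (hS.disjoint.union_left hT.disjoint).mono_left unionSep_subset
  have hU := isSep_unionSep hS.isSep hT.isSep
  exact ⟨hU, hUF,
    (hT.ncard_eq ▸ hS.ncard_unionSep_le hT.disjoint).antisymm (flowAvoiding_le hU hUF)⟩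

structure IsFurthestMinSepAvoiding (G : SimpleGraph V) (A B F S : Set V) : Prop
    extends IsMinSepAvoiding G A B F S where
  reachG_subset : ∀ T, IsMinSepAvoiding G A B F T → reachG G A T ⊆ reachG G A S

lemma exists_isFurthestMinSepAvoiding (hS : IsSep G A B S) (hSF : Disjoint S F) :
    ∃ S, IsFurthestMinSepAvoiding G A B F S := by
  obtain ⟨S₀, hS₀⟩ := exists_isMinSepAvoiding hS hSF
  obtain ⟨S, hS, hmax⟩ := (Set.toFinite {T | IsMinSepAvoiding G A B F T}).exists_maximalFor
    (reachG G A) _ ⟨S₀, hS₀⟩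
  refine ⟨S, { toIsMinSepAvoiding := hS, reachG_subset := fun T hT => ?_ }⟩
  have hreach := reachG_unionSep (G := G) (A := A) (S := S) (T := T)
  exact Set.subset_union_right.trans
    (hreach ▸ hmax (hS.unionSep hT) (hreach ▸ Set.subset_union_left))

lemma IsFurthestMinSepAvoiding.flowAvoiding_lt (hS : IsFurthestMinSepAvoiding G A B F S)
    {v : V} (hv : v ∈ S) (hT : IsSep G A B T) (hTF : Disjoint T F)
    (hTv : Disjoint T (insert v (reachG G A S))) : flowAvoiding G A B F < T.ncard := by
  refine (flowAvoiding_le hT hTF).lt_of_ne fun heq => ?_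
  have hTmin : IsMinSepAvoiding G A B F T := ⟨hT, hTF, heq.symm⟩
  have hTS : T ⊆ S \ {v} := fun t ht => by
    have htv : t ∉ insert v (reachG G A S) := hTv.notMem_of_mem_left ht
    rw [Set.mem_insert_iff, not_or] at htv
    exact ⟨(hTmin.isMinimalSep.subset_union_reachG (hS.reachG_subset T hTmin) ht).resolve_right
      htv.2, htv.1⟩
  have hlt := Set.ncard_lt_ncard (hTS.trans_ssubset (Set.sdiff_singleton_ssubset.mpr hv))
  have := hS.ncard_eq
  omega

end MinSepAvoiding

def importantSepsReaching (G : SimpleGraph V) (A B : Set V) (k : ℕ) (X : Set V) :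
    Set (Set V) :=
  {S | IsImportantSep G A B S ∧ S.ncard ≤ k ∧ X ⊆ reachG G A S}

namespace importantSepsReaching

variable {G : SimpleGraph V} {A B X S S' : Set V} {k : ℕ}

lemma reachG_union (hS : S ∈ importantSepsReaching G A B k X) :
    reachG G (A ∪ X) S = reachG G A S :=
  reachG_union_eq_of_subset hS.2.2

lemma isSep_union (hS : S ∈ importantSepsReaching G A B k X) : IsSep G (A ∪ X) B S := by
  rw [isSep_iff_disjoint_reachG, reachG_union hS, ← isSep_iff_disjoint_reachG]
  exact hS.1.1.1

lemma disjoint (hS : S ∈ importantSepsReaching G A B k X) : Disjoint S X :=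
  Set.disjoint_of_subset_right hS.2.2
    (Set.disjoint_right.mpr fun _ hv => notMem_of_mem_reachG hv)

variable [Finite V]

lemma reachG_subset (hS' : IsMinSepAvoiding G (A ∪ X) B X S')
    (hS : S ∈ importantSepsReaching G A B k X) : reachG G (A ∪ X) S' ⊆ reachG G A S := by
  set U := unionSep G (A ∪ X) S' S
  have hUsep : IsSep G (A ∪ X) B U := isSep_unionSep hS'.isSep (isSep_union hS)
  have hSU : reachG G A S ⊆ reachG G A U := by
    refine reachG_subset_reachG_of_disjoint (Set.disjoint_left.mpr fun w hw hwU => hwU.2 ?_)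
    exact Or.inr ((reachG_union hS).symm ▸ hw)
  have hUreach : reachG G A U = reachG G (A ∪ X) S' ∪ reachG G A S := by
    rw [← reachG_union_eq_of_subset (hS.2.2.trans hSU), reachG_unionSep, reachG_union hS]
  -- otherwise `U` would be a no larger separator reaching strictly further than `S`
  have hUS : reachG G A U = reachG G A S :=
    hS.1.reachG_eq_of_subset (hUsep.mono_left Set.subset_union_left)
      (hS'.ncard_unionSep_le (disjoint hS)) hSU
  exact hUS ▸ hUreach ▸ Set.subset_union_left

lemma eq_of_ncard_le (hS' : IsFurthestMinSepAvoiding G (A ∪ X) B X S')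
    (hS : S ∈ importantSepsReaching G A B k X)
    (hcard : S.ncard ≤ flowAvoiding G (A ∪ X) B X) :
    S = S' := by
  have hmin : IsMinSepAvoiding G (A ∪ X) B X S :=
    ⟨isSep_union hS, disjoint hS,
      hcard.antisymm (flowAvoiding_le (isSep_union hS) (disjoint hS))⟩
  refine hmin.isMinimalSep.eq_of_reachG_eq hS'.isMinimalSep ?_
  exact (hS'.reachG_subset S hmin).antisymm ((reachG_union hS).symm ▸ reachG_subset hS'.1 hS)

lemma exists_mem_reachG (hS' : IsMinSepAvoiding G (A ∪ X) B X S')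
    (hS : S ∈ importantSepsReaching G A B k X) (hne : S ≠ S') :
    ∃ v ∈ S', v ∈ reachG G A S := by
  by_contra! h
  rw [← reachG_union hS] at h
  have hS'S : S' ⊆ S := fun v hv =>
    (hS'.isMinimalSep.subset_union_reachG ((reachG_union hS).symm ▸ reachG_subset hS' hS)
      hv).resolve_right (h v hv)
  exact hS.1.1.2 S' (hS'S.ssubset_of_ne hne.symm) (hS'.isSep.mono_left Set.subset_union_left)

lemma subset_insert_biUnion (hS' : IsMinSepAvoiding G (A ∪ X) B X S') :
    importantSepsReaching G A B k X ⊆ insert S'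
      (⋃ v ∈ S', importantSepsReaching G A B k (insert v (reachG G (A ∪ X) S'))) := by
  intro S hS
  by_cases hne : S = S'
  · exact Or.inl hne
  obtain ⟨v, hv, hvS⟩ := exists_mem_reachG hS' hS hne
  exact Or.inr
    (Set.mem_biUnion hv ⟨hS.1, hS.2.1, Set.insert_subset hvS (reachG_subset hS' hS)⟩)

lemma flowAvoiding_lt (hS' : IsFurthestMinSepAvoiding G (A ∪ X) B X S') {v : V} (hv : v ∈ S')
    (hne : (importantSepsReaching G A B k (insert v (reachG G (A ∪ X) S'))).Nonempty) :
    flowAvoiding G (A ∪ X) B X <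
      flowAvoiding G (A ∪ insert v (reachG G (A ∪ X) S')) B
        (insert v (reachG G (A ∪ X) S')) := by
  obtain ⟨S, hS⟩ := hne
  obtain ⟨T, hT⟩ := exists_isMinSepAvoiding (isSep_union hS) (disjoint hS)
  have hX : X ⊆ insert v (reachG G (A ∪ X) S') :=
    (subset_reachG Set.subset_union_right hS'.disjoint.symm).trans (Set.subset_insert _ _)
  rw [← hT.ncard_eq]
  exact hS'.flowAvoiding_lt hv (hT.isSep.mono_left (Set.union_subset_union_right A hX))
    (hT.disjoint.mono_right hX) hT.disjoint

end importantSepsReaching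

section Counting

variable {G : SimpleGraph V} {A B : Set V} {k : ℕ} [Finite V]

theorem ncard_importantSepsReaching_le (X : Set V) :
    (importantSepsReaching G A B k X).ncard ≤ k ^ (k - flowAvoiding G (A ∪ X) B X) := by
  induction hn : k - flowAvoiding G (A ∪ X) B X using Nat.strong_induction_on generalizing X
    with | _ n ih =>
  rcases (importantSepsReaching G A B k X).eq_empty_or_nonempty with hemp | ⟨S, hS⟩
  · rw [hemp, Set.ncard_empty]; exact Nat.zero_le _
  obtain ⟨S', hS'⟩ := exists_isFurthestMinSepAvoiding (importantSepsReaching.isSep_union hS)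
    (importantSepsReaching.disjoint hS)
  rcases Nat.eq_zero_or_pos n with rfl | hpos
  · have hsub : importantSepsReaching G A B k X ⊆ {S'} := fun S hS =>
      importantSepsReaching.eq_of_ncard_le hS' hS (by have := hS.2.1; omega)
    simpa using Set.ncard_le_ncard hsub
  have hbranch : ∀ v ∈ S',
      (importantSepsReaching G A B k (insert v (reachG G (A ∪ X) S'))).ncard ≤ k ^ (n - 1) := by
    intro v hv
    rcases (importantSepsReaching G A B k _).eq_empty_or_nonempty with hemp | hne
    · rw [hemp, Set.ncard_empty]; exact Nat.zero_le _
    have hlt := importantSepsReaching.flowAvoiding_lt hS' hv hne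
    exact (ih _ (by omega) _ rfl).trans (Nat.pow_le_pow_right (by omega) (by omega))
  have hcard := hS'.ncard_eq
  calc (importantSepsReaching G A B k X).ncard
      ≤ (⋃ v ∈ S', importantSepsReaching G A B k (insert v (reachG G (A ∪ X) S'))).ncard
          + 1 :=
        (Set.ncard_le_ncard (importantSepsReaching.subset_insert_biUnion hS'.1)).trans
          (Set.ncard_insert_le _ _)
    _ ≤ S'.ncard * k ^ (n - 1) + k ^ (n - 1) := by
        gcongr
        exacts [Set.ncard_biUnion_le_ncard_mul (Set.toFinite S') hbranch,
          Nat.one_le_pow _ _ (by omega)]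
    _ ≤ k * k ^ (n - 1) := by rw [← add_one_mul]; gcongr; omega
    _ = k ^ n := by rw [← pow_succ', Nat.sub_add_cancel hpos]

end Counting

theorem important_separator_count_general {V : Type} [Fintype V]
    (G : SimpleGraph V) (A B : Set V) (k : ℕ) :
    {S : Set V | IsImportantSep G A B S ∧ S.ncard ≤ k}.ncard
      ≤ k ^ (k - flowG G A B) := by
  have h := ncard_importantSepsReaching_le (G := G) (A := A) (B := B) (k := k) ∅
  simpa [importantSepsReaching, flowAvoiding_empty] using h

/-- For any `A, B ⊆ V(G)` and `k ≥ flow_G(A, B)`, the number of important `(A, B)`-separators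
of size at most `k` is at most `k ^ (k - flow_G(A, B))`. -/
theorem important_separator_count {V : Type} [Fintype V]
    (G : SimpleGraph V) (A B : Set V) (k : ℕ) (hk : flowG G A B ≤ k) :
    {S : Set V | IsImportantSep G A B S ∧ S.ncard ≤ k}.ncard
      ≤ k ^ (k - flowG G A B) :=
  important_separator_count_general G A B k
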